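/- arXiv:1906.07772 — 4 statements merged into one kernel-verified Lean document; each statement's English description precedes it below -/
import Mathlib

section
/- Let A = diag(λ_1,...,λ_d) be nonsingular with λ_i > 0 for i ≤ j and λ_i < 0 for i > j, and let α_t > 0 satisfy α_t ≥ 1/(t+1), α_t → 0, and |λ_i| α_t < 1 for all i, t. Then the gradient descent iterates x_{k+1} = (I - α_k A) x_k converge to 0 if and only if the i-th coordinate of x_0 vanishes for every i with λ_i < 0. -/
open Matrix
open Filter

theorem stmt3 {d : ℕ} (lam : Fin d → ℝ) (α : ℕ → ℝ) (x : ℕ → Fin d → ℝ)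
    (hns : ∀ i, lam i ≠ 0)
    (hα : ∀ t, 0 < α t) (hge : ∀ t : ℕ, 1 / ((t : ℝ) + 1) ≤ α t)
    (hα0 : Tendsto α atTop (nhds 0))
    (hlt : ∀ i t, |lam i| * α t < 1)
    (hiter : ∀ k, x (k + 1) =
      ((1 : Matrix (Fin d) (Fin d) ℝ) - α k • Matrix.diagonal lam) *ᵥ x k) :
    Tendsto x atTop (nhds 0) ↔ ∀ i, lam i < 0 → x 0 i = 0 := by
  have hstep : ∀ k i, x (k + 1) i = (1 - α k * lam i) * x k i := by
    intro k i
    have hM : ((1 : Matrix (Fin d) (Fin d) ℝ) - α k • Matrix.diagonal lam)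
        = Matrix.diagonal (fun j => 1 - α k * lam j) := by
      ext a b
      by_cases h : a = b <;>
        simp [Matrix.diagonal, h, Matrix.one_apply, Matrix.sub_apply]
    have := congrFun (hiter k) i
    rw [hM] at this
    simpa [Matrix.mulVec_diagonal] using this
  have hx : ∀ k i, x k i = x 0 i * ∏ t ∈ Finset.range k, (1 - α t * lam i) := by
    intro k i
    induction k with
    | zero => simp
    | succ n ih =>
        rw [hstep n i, ih, Finset.prod_range_succ]
        ring
  rw [tendsto_pi_nhds]
  constructor
  · intro ht i hneg
    by_contra h0
    have hti : Tendsto (fun k => x k i) atTop (nhds 0) := by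
      simpa using ht i
    rw [Metric.tendsto_atTop] at hti
    obtain ⟨N, hN⟩ := hti (|x 0 i|) (abs_pos.mpr h0)
    have hNd := hN N le_rfl
    rw [Real.dist_eq, sub_zero] at hNd
    have hprod : (1 : ℝ) ≤ ∏ t ∈ Finset.range N, (1 - α t * lam i) := by
      calc (1:ℝ) = ∏ t ∈ Finset.range N, (1:ℝ) := by simp
        _ ≤ ∏ t ∈ Finset.range N, (1 - α t * lam i) :=
            Finset.prod_le_prod (fun t _ => zero_le_one)
              (fun t _ => by nlinarith [hα t])
    have : |x 0 i| ≤ |x N i| := by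
      rw [hx N i, abs_mul]
      have h1 : |∏ t ∈ Finset.range N, (1 - α t * lam i)| ≥ 1 :=
        le_trans hprod (le_abs_self _)
      nlinarith [abs_nonneg (x 0 i)]
    linarith
  · intro h0 i
    simp only [Pi.zero_apply]
    rcases lt_or_gt_of_ne (hns i) with hneg | hpos
    · have : ∀ k, x k i = 0 := by
        intro k
        rw [hx k i, h0 i hneg, zero_mul]
      simpa [this] using tendsto_const_nhds (α := ℝ) (f := atTop)
    · -- positive eigenvalue: product tends to 0
      have hS : Tendsto (fun k => ∑ t ∈ Finset.range k, α t) atTop atTop := by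
        apply tendsto_atTop_mono
          (fun k => Finset.sum_le_sum (fun t _ => hge t))
        exact Real.tendsto_sum_range_one_div_nat_succ_atTop
      have hE : Tendsto (fun k => Real.exp (-(lam i) * ∑ t ∈ Finset.range k, α t))
          atTop (nhds 0) := by
        apply Real.tendsto_exp_atBot.comp
        exact Tendsto.const_mul_atTop_of_neg (by linarith) hS
      have hbound : ∀ k, |x k i| ≤ |x 0 i| *
          Real.exp (-(lam i) * ∑ t ∈ Finset.range k, α t) := by
        intro k
        rw [hx k i, abs_mul]
        apply mul_le_mul_of_nonneg_left _ (abs_nonneg _)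
        have hfac : ∀ t ∈ Finset.range k, (0:ℝ) ≤ 1 - α t * lam i := by
          intro t _
          have := hlt i t
          rw [abs_of_pos hpos] at this
          nlinarith
        have : |∏ t ∈ Finset.range k, (1 - α t * lam i)|
            = ∏ t ∈ Finset.range k, (1 - α t * lam i) :=
          abs_of_nonneg (Finset.prod_nonneg hfac)
        rw [this]
        calc ∏ t ∈ Finset.range k, (1 - α t * lam i)
            ≤ ∏ t ∈ Finset.range k, Real.exp (-(α t * lam i)) := by
              apply Finset.prod_le_prod hfac
              intro t _
              have := Real.add_one_le_exp (-(α t * lam i))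
              linarith
          _ = Real.exp (-(lam i) * ∑ t ∈ Finset.range k, α t) := by
              rw [← Real.exp_sum]
              congr 1
              rw [Finset.mul_sum]
              apply Finset.sum_congr rfl
              intro t _
              ring
      have habs : Tendsto (fun k => |x k i|) atTop (nhds 0) := by
        apply squeeze_zero (fun k => abs_nonneg _) hbound
        have := (tendsto_const_nhds (x := |x 0 i|) (f := atTop)).mul hE
        simpa using this
      exact tendsto_zero_iff_abs_tendsto_zero _ |>.mpr habs
end

section
/- Let λ > 0, α_k > 0 with α_k λ < 1 for all k, ∑_k α_k = ∞, and let (b_k) be a sequence of nonnegative reals with b_k → 0. Define S_k by S_0 = α_0 b_0 and S_{k+1} = (1 - α_{k+1} λ) S_k + α_{k+1} b_{k+1}. Then S_k → 0. -/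
/-
The absolute values x k = |S k| satisfy x (k + 1) ≤ (1 - a k) x k + a k e k with
a k = α (k + 1) lam ∈ [0, 1] and e k = |b (k + 1)| / lam → 0. Once e ≤ ε from N on, induction gives
x (N + m) ≤ ε + x N ∏_{i<m} (1 - a (N + i)), and the product is at most exp (-∑ a), which tends
to 0 because the step sizes are not summable.
-/

open Filter Finset

theorem tendsto_prod_range_one_sub_of_tendsto_sum {a : ℕ → ℝ} (ha : ∀ k, a k ≤ 1)
    (hdiv : Tendsto (fun n => ∑ i ∈ range n, a i) atTop atTop) :
    Tendsto (fun n => ∏ i ∈ range n, (1 - a i)) atTop (nhds 0) := by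
  refine squeeze_zero (fun n => prod_nonneg fun i _ => sub_nonneg.2 (ha i))
    (fun n => ?_) (Real.tendsto_exp_atBot.comp (tendsto_neg_atTop_atBot.comp hdiv))
  calc ∏ i ∈ range n, (1 - a i) ≤ ∏ i ∈ range n, Real.exp (-a i) :=
        prod_le_prod (fun i _ => sub_nonneg.2 (ha i)) fun i _ => Real.one_sub_le_exp_neg _
    _ = Real.exp (-∑ i ∈ range n, a i) := by rw [← sum_neg_distrib, Real.exp_sum]

theorem tendsto_sum_range_add_left_atTop {a : ℕ → ℝ} (N : ℕ)
    (hdiv : Tendsto (fun n => ∑ i ∈ range n, a i) atTop atTop) :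
    Tendsto (fun n => ∑ i ∈ range n, a (N + i)) atTop atTop := by
  refine (tendsto_atTop_add_const_left _ (-∑ i ∈ range N, a i)
    (hdiv.comp (tendsto_add_atTop_nat N))).congr fun n => ?_
  rw [Function.comp_apply, add_comm n N, sum_range_add, neg_add_cancel_left]

theorem le_add_prod_mul_of_le_one_sub_mul {a x : ℕ → ℝ} {ε : ℝ} (hε : 0 ≤ ε) (ha : ∀ k, a k ≤ 1)
    (hrec : ∀ k, x (k + 1) ≤ (1 - a k) * x k + a k * ε) (n : ℕ) :
    x n ≤ ε + (∏ i ∈ range n, (1 - a i)) * x 0 := by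
  induction n with
  | zero => simpa using hε
  | succ n ih =>
    calc x (n + 1) ≤ (1 - a n) * (ε + (∏ i ∈ range n, (1 - a i)) * x 0) + a n * ε :=
          (hrec n).trans (by gcongr; linarith [ha n])
      _ = ε + (∏ i ∈ range (n + 1), (1 - a i)) * x 0 := by rw [prod_range_succ]; ring

theorem tendsto_zero_of_le_one_sub_mul_add {a e x : ℕ → ℝ} (ha₀ : ∀ k, 0 ≤ a k)
    (ha₁ : ∀ k, a k ≤ 1) (hdiv : Tendsto (fun n => ∑ i ∈ range n, a i) atTop atTop)
    (he : Tendsto e atTop (nhds 0)) (hx : ∀ k, 0 ≤ x k)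
    (hrec : ∀ k, x (k + 1) ≤ (1 - a k) * x k + a k * e k) :
    Tendsto x atTop (nhds 0) := by
  refine tendsto_order.2 ⟨fun δ hδ => Eventually.of_forall fun k => hδ.trans_le (hx k),
    fun δ hδ => ?_⟩
  obtain ⟨N, hN⟩ := eventually_atTop.1 (he.eventually (ge_mem_nhds (half_pos hδ)))
  have hbound (m : ℕ) : x (N + m) ≤ δ / 2 + (∏ i ∈ range m, (1 - a (N + i))) * x N := by
    refine le_add_prod_mul_of_le_one_sub_mul (x := fun m => x (N + m)) (a := fun i => a (N + i))
      (half_pos hδ).le (fun k => ha₁ _) (fun k => (hrec (N + k)).trans ?_) m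
    gcongr _ + ?_
    exact mul_le_mul_of_nonneg_left (hN (N + k) (by omega)) (ha₀ _)
  have hlim : Tendsto (fun m => δ / 2 + (∏ i ∈ range m, (1 - a (N + i))) * x N) atTop
      (nhds (δ / 2)) := by
    simpa using tendsto_const_nhds.add ((tendsto_prod_range_one_sub_of_tendsto_sum
      (fun k => ha₁ _) (tendsto_sum_range_add_left_atTop N hdiv)).mul_const (x N))
  rw [← map_add_atTop_eq_nat N, eventually_map]
  filter_upwards [hlim.eventually (gt_mem_nhds (half_lt_self hδ))] with m hm
  exact (add_comm m N ▸ hbound m).trans_lt hm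

theorem stmt6_general (lam : ℝ) (α b S : ℕ → ℝ) (hlam : 0 < lam)
    (hα : ∀ k, 0 < α k) (halam : ∀ k, α k * lam < 1)
    (hdiv : Tendsto (fun n => ∑ i ∈ Finset.range n, α i) atTop atTop)
    (hb0 : Tendsto b atTop (nhds 0))
    (hSrec : ∀ k, S (k + 1) = (1 - α (k + 1) * lam) * S k + α (k + 1) * b (k + 1)) :
    Tendsto S atTop (nhds 0) := by
  have hstep : Tendsto (fun n => ∑ i ∈ range n, α (i + 1) * lam) atTop atTop := by
    refine ((tendsto_sum_range_add_left_atTop 1 hdiv).atTop_mul_const hlam).congr fun n => ?_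
    simp [add_comm, sum_mul]
  have hinput : Tendsto (fun k => |b (k + 1)| / lam) atTop (nhds 0) := by
    simpa using ((hb0.comp (tendsto_add_atTop_nat 1)).abs).div_const lam
  refine (tendsto_zero_iff_abs_tendsto_zero S).2 <| tendsto_zero_of_le_one_sub_mul_add
    (fun k => (mul_pos (hα _) hlam).le) (fun k => (halam _).le) hstep hinput
    (fun k => abs_nonneg _) fun k => ?_
  calc |S (k + 1)| ≤ |(1 - α (k + 1) * lam) * S k| + |α (k + 1) * b (k + 1)| :=
        hSrec k ▸ abs_add_le _ _
    _ = (1 - α (k + 1) * lam) * |S k| + α (k + 1) * lam * (|b (k + 1)| / lam) := by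
        rw [abs_mul, abs_mul, abs_of_pos (sub_pos.2 (halam _)), abs_of_pos (hα _),
          mul_assoc, mul_div_cancel₀ _ hlam.ne']

theorem stmt6 (lam : ℝ) (α b S : ℕ → ℝ) (hlam : 0 < lam)
    (hα : ∀ k, 0 < α k) (halam : ∀ k, α k * lam < 1)
    (hdiv : Tendsto (fun n => ∑ i ∈ Finset.range n, α i) atTop atTop)
    (hb : ∀ k, 0 ≤ b k) (hb0 : Tendsto b atTop (nhds 0))
    (hS0 : S 0 = α 0 * b 0)
    (hSrec : ∀ k, S (k + 1) = (1 - α (k + 1) * lam) * S k + α (k + 1) * b (k + 1)) :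
    Tendsto S atTop (nhds 0) :=
  stmt6_general lam α b S hlam hα halam hdiv hb0 hSrec
end

section
/- Under the hypotheses of the stable manifold theorem (Lipschitz bound ‖η(k,x) - η(k,y)‖ ≤ α_k ε ‖x-y‖ on B(δ), bounds ∑_{i=0}^k α_i ‖B(k,i+1)‖ ≤ K₁, ∑_{i=0}^∞ α_{k+1+i} ‖C(k+1+i,k+1)^{-1}‖ ≤ K₂, and ‖B(k,0)‖ ≤ 1 - α₀λ with ε(K₁+K₂) < α₀λ), the Lyapunov–Perron operator T is a contraction on ℓ₀(B(δ)) with contraction constant K = 1 - α₀λ + ε(K₁+K₂) < 1. -/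
open Filter Finset

/-!
For sequences in the ball with `‖x n - y n‖ ≤ C'`, the Lipschitz bound gives
`‖η(i, xᵢ) - η(i, yᵢ)‖ ≤ αᵢ ε C'`. The stable component of `Tx - Ty` is `B(k,0)(x₀ - y₀)` plus a
finite `B`-weighted sum of these differences, hence at most `(1 - α₀λ) C' + K₁ ε C'`; the unstable
component is a `C⁻¹`-weighted series of them, hence at most `K₂ ε C'`. These series converge
because `η(i, 0) = 0` bounds `‖η(i, xᵢ)‖` by `αᵢ ε δ`. The sup norm on `E × F` takes the larger
of the two bounds.
-/

section LyapunovPerron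

variable {𝕜 E F : Type*} [NontriviallyNormedField 𝕜] [NormedAddCommGroup E] [NormedSpace 𝕜 E]
  [NormedAddCommGroup F] [NormedSpace 𝕜 F]

lemma norm_sum_apply_sub_sum_apply_le {ι : Type*} (s : Finset ι) (L : ι → E →L[𝕜] F)
    (v w : ι → E) :
    ‖∑ i ∈ s, L i (v i) - ∑ i ∈ s, L i (w i)‖ ≤ ∑ i ∈ s, ‖L i‖ * ‖v i - w i‖ := by
  rw [← sum_sub_distrib]
  exact norm_sum_le_of_le s fun i _ => by rw [← map_sub]; exact (L i).le_opNorm _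

lemma summable_apply_of_norm_le [CompleteSpace F] {L : ℕ → E →L[𝕜] F} {v : ℕ → E} {a : ℕ → ℝ}
    {c : ℝ} (ha : Summable fun i => a i * ‖L i‖) (hv : ∀ i, ‖v i‖ ≤ a i * c) :
    Summable fun i => L i (v i) :=
  .of_norm_bounded (ha.mul_right c) fun i =>
    ((L i).le_opNorm_of_le (hv i)).trans_eq (by ring)

lemma norm_tsum_apply_sub_tsum_apply_le {L : ℕ → E →L[𝕜] F} {v w : ℕ → E} {a : ℕ → ℝ} {c : ℝ}
    (ha : Summable fun i => a i * ‖L i‖) (hv : Summable fun i => L i (v i))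
    (hw : Summable fun i => L i (w i)) (hvw : ∀ i, ‖v i - w i‖ ≤ a i * c) :
    ‖∑' i, L i (v i) - ∑' i, L i (w i)‖ ≤ (∑' i, a i * ‖L i‖) * c := by
  rw [← hv.tsum_sub hw, ← tsum_mul_right]
  refine tsum_of_norm_bounded (ha.mul_right c).hasSum fun i => ?_
  rw [← map_sub]
  exact ((L i).le_opNorm_of_le (hvw i)).trans_eq (by ring)

/-- `E` and `F` are the stable and unstable components, and `Cinv m n` stands for `C(m, n)⁻¹`. -/
noncomputable def lyapunovPerron (B : ℕ → ℕ → E →L[𝕜] E) (Cinv : ℕ → ℕ → F →L[𝕜] F)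
    (η : ℕ → E × F → E × F) (x : ℕ → E × F) : ℕ → E × F
  | 0 => x 0
  | k + 1 => (B k 0 (x 0).1 + ∑ i ∈ range (k + 1), B k (i + 1) (η i (x i)).1,
      -∑' i, Cinv (k + 1 + i) (k + 1) (η (k + 1 + i) (x (k + 1 + i))).2)

variable (B : ℕ → ℕ → E →L[𝕜] E) (Cinv : ℕ → ℕ → F →L[𝕜] F) (η : ℕ → E × F → E × F)
  {x y : ℕ → E × F} {α : ℕ → ℝ}

lemma norm_lyapunovPerron_fst_sub_le {k : ℕ} {b c C' K₁ : ℝ} (hB0 : ‖B k 0‖ ≤ b)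
    (hB : ∑ i ∈ range (k + 1), α i * ‖B k (i + 1)‖ ≤ K₁) (hc : 0 ≤ c)
    (hxy : ‖x 0 - y 0‖ ≤ C') (hηxy : ∀ i, ‖η i (x i) - η i (y i)‖ ≤ α i * c) :
    ‖(lyapunovPerron B Cinv η x (k + 1)).1 - (lyapunovPerron B Cinv η y (k + 1)).1‖
      ≤ b * C' + K₁ * c := by
  have h0 : ‖B k 0 (x 0).1 - B k 0 (y 0).1‖ ≤ b * C' := by
    rw [← map_sub]
    exact ((B k 0).le_opNorm_of_le ((norm_fst_le _).trans hxy)).trans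
      (mul_le_mul_of_nonneg_right hB0 ((norm_nonneg _).trans hxy))
  have hsum : ‖∑ i ∈ range (k + 1), B k (i + 1) (η i (x i)).1
      - ∑ i ∈ range (k + 1), B k (i + 1) (η i (y i)).1‖ ≤ K₁ * c := by
    refine (norm_sum_apply_sub_sum_apply_le _ _ _ _).trans ?_
    calc ∑ i ∈ range (k + 1), ‖B k (i + 1)‖ * ‖(η i (x i)).1 - (η i (y i)).1‖
        ≤ ∑ i ∈ range (k + 1), α i * ‖B k (i + 1)‖ * c :=
          sum_le_sum fun i _ => (mul_le_mul_of_nonneg_left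
            ((norm_fst_le _).trans (hηxy i)) (norm_nonneg _)).trans_eq (by ring)
      _ ≤ K₁ * c := by rw [← sum_mul]; exact mul_le_mul_of_nonneg_right hB hc
  calc _ = ‖(B k 0 (x 0).1 - B k 0 (y 0).1) + (∑ i ∈ range (k + 1), B k (i + 1) (η i (x i)).1
        - ∑ i ∈ range (k + 1), B k (i + 1) (η i (y i)).1)‖ := by
          simp only [lyapunovPerron]; abel_nf
    _ ≤ b * C' + K₁ * c := (norm_add_le _ _).trans (add_le_add h0 hsum)

lemma norm_lyapunovPerron_snd_sub_le [CompleteSpace F] {k : ℕ} {c d K₂ : ℝ}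
    (hCsummable : Summable fun i => α (k + 1 + i) * ‖Cinv (k + 1 + i) (k + 1)‖)
    (hC : ∑' i, α (k + 1 + i) * ‖Cinv (k + 1 + i) (k + 1)‖ ≤ K₂) (hc : 0 ≤ c)
    (hx : ∀ i, ‖η i (x i)‖ ≤ α i * d) (hy : ∀ i, ‖η i (y i)‖ ≤ α i * d)
    (hηxy : ∀ i, ‖η i (x i) - η i (y i)‖ ≤ α i * c) :
    ‖(lyapunovPerron B Cinv η x (k + 1)).2 - (lyapunovPerron B Cinv η y (k + 1)).2‖
      ≤ K₂ * c := by
  have summable_of_bound {z : ℕ → E × F} (hz : ∀ i, ‖η i (z i)‖ ≤ α i * d) :=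
    summable_apply_of_norm_le (v := fun i => (η (k + 1 + i) (z (k + 1 + i))).2) hCsummable
      fun i => (norm_snd_le _).trans (hz _)
  simp only [lyapunovPerron, neg_sub_neg]
  rw [norm_sub_rev]
  refine (norm_tsum_apply_sub_tsum_apply_le hCsummable (summable_of_bound hx)
    (summable_of_bound hy) fun i => (norm_snd_le _).trans (hηxy _)).trans ?_
  exact mul_le_mul_of_nonneg_right hC hc

end LyapunovPerron

theorem stmt14_general {s u : ℕ} (δ ε lam K₁ K₂ : ℝ) (α : ℕ → ℝ)
    (B : ℕ → ℕ → (EuclideanSpace ℝ (Fin s) →L[ℝ] EuclideanSpace ℝ (Fin s)))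
    (Cinv : ℕ → ℕ → (EuclideanSpace ℝ (Fin u) →L[ℝ] EuclideanSpace ℝ (Fin u)))
    (η : ℕ → (EuclideanSpace ℝ (Fin s) × EuclideanSpace ℝ (Fin u)) →
      (EuclideanSpace ℝ (Fin s) × EuclideanSpace ℝ (Fin u)))
    (hδ : 0 < δ) (hε : 0 < ε) (hα : ∀ k, 0 < α k)
    (hη0 : ∀ k, η k 0 = 0)
    (hη : ∀ k x y, ‖x‖ ≤ δ → ‖y‖ ≤ δ → ‖η k x - η k y‖ ≤ α k * ε * ‖x - y‖)
    (hB0 : ∀ k, ‖B k 0‖ ≤ 1 - α 0 * lam)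
    (hB : ∀ k, ∑ i ∈ Finset.range (k + 1), α i * ‖B k (i + 1)‖ ≤ K₁)
    (hCsummable : ∀ k, Summable fun i => α (k + 1 + i) * ‖Cinv (k + 1 + i) (k + 1)‖)
    (hC : ∀ k, (∑' i, α (k + 1 + i) * ‖Cinv (k + 1 + i) (k + 1)‖) ≤ K₂)
    (hcontr : ε * (K₁ + K₂) < α 0 * lam) :
    (1 - α 0 * lam + ε * (K₁ + K₂) < 1) ∧
    ∀ x y : ℕ → EuclideanSpace ℝ (Fin s) × EuclideanSpace ℝ (Fin u),
      (∀ n, ‖x n‖ ≤ δ) → (∀ n, ‖y n‖ ≤ δ) →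
      Tendsto x atTop (nhds 0) → Tendsto y atTop (nhds 0) →
      ∀ C' : ℝ, 0 ≤ C' → (∀ n, ‖x n - y n‖ ≤ C') → ∀ k,
      ‖((B k 0 ((x 0).1) + ∑ i ∈ Finset.range (k + 1), B k (i + 1) ((η i (x i)).1),
          -∑' i, Cinv (k + 1 + i) (k + 1) ((η (k + 1 + i) (x (k + 1 + i))).2)) :
          EuclideanSpace ℝ (Fin s) × EuclideanSpace ℝ (Fin u))
        - (B k 0 ((y 0).1) + ∑ i ∈ Finset.range (k + 1), B k (i + 1) ((η i (y i)).1),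
          -∑' i, Cinv (k + 1 + i) (k + 1) ((η (k + 1 + i) (y (k + 1 + i))).2))‖
        ≤ (1 - α 0 * lam + ε * (K₁ + K₂)) * C' := by
  refine ⟨by linarith, fun x y hx hy _ _ C' hC' hxy k => ?_⟩
  have hαε i : 0 ≤ α i * ε := mul_nonneg (hα i).le hε.le
  have hη_bound {z : ℕ → _} (hz : ∀ n, ‖z n‖ ≤ δ) i : ‖η i (z i)‖ ≤ α i * (ε * δ) := by
    have := hη i (z i) 0 (hz i) (by simpa using hδ.le)
    rw [hη0, sub_zero, sub_zero] at this
    exact this.trans ((mul_le_mul_of_nonneg_left (hz i) (hαε i)).trans_eq (mul_assoc ..))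
  have hηxy i : ‖η i (x i) - η i (y i)‖ ≤ α i * (ε * C') :=
    (hη i _ _ (hx i) (hy i)).trans
      ((mul_le_mul_of_nonneg_left (hxy i) (hαε i)).trans_eq (mul_assoc ..))
  have hεC' : 0 ≤ ε * C' := mul_nonneg hε.le hC'
  have hK₁ : 0 ≤ K₁ := (sum_nonneg fun i _ => mul_nonneg (hα i).le (norm_nonneg _)).trans (hB 0)
  have hK₂ : 0 ≤ K₂ := (tsum_nonneg fun i => mul_nonneg (hα _).le (norm_nonneg _)).trans (hC 0)
  have hb : 0 ≤ 1 - α 0 * lam := (norm_nonneg _).trans (hB0 0)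
  have hstable := norm_lyapunovPerron_fst_sub_le B Cinv η (hB0 k) (hB k) hεC' (hxy 0) hηxy
  have hunstable := norm_lyapunovPerron_snd_sub_le B Cinv η (hCsummable k) (hC k) hεC'
    (hη_bound hx) (hη_bound hy) hηxy
  change ‖lyapunovPerron B Cinv η x (k + 1) - lyapunovPerron B Cinv η y (k + 1)‖ ≤ _
  rw [Prod.norm_def]
  refine max_le (hstable.trans ?_) (hunstable.trans ?_)
  · linarith [mul_nonneg hK₂ hεC']
  · linarith [mul_nonneg hb hC', mul_nonneg hK₁ hεC']

theorem stmt14 {s u : ℕ} (δ ε lam K₁ K₂ : ℝ) (α : ℕ → ℝ)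
    (B : ℕ → ℕ → (EuclideanSpace ℝ (Fin s) →L[ℝ] EuclideanSpace ℝ (Fin s)))
    (Cinv : ℕ → ℕ → (EuclideanSpace ℝ (Fin u) →L[ℝ] EuclideanSpace ℝ (Fin u)))
    (η : ℕ → (EuclideanSpace ℝ (Fin s) × EuclideanSpace ℝ (Fin u)) →
      (EuclideanSpace ℝ (Fin s) × EuclideanSpace ℝ (Fin u)))
    (hδ : 0 < δ) (hε : 0 < ε) (hlam : 0 < lam) (hα : ∀ k, 0 < α k)
    (hη0 : ∀ k, η k 0 = 0)
    (hη : ∀ k x y, ‖x‖ ≤ δ → ‖y‖ ≤ δ → ‖η k x - η k y‖ ≤ α k * ε * ‖x - y‖)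
    (hB0 : ∀ k, ‖B k 0‖ ≤ 1 - α 0 * lam)
    (hB : ∀ k, ∑ i ∈ Finset.range (k + 1), α i * ‖B k (i + 1)‖ ≤ K₁)
    (hCsummable : ∀ k, Summable fun i => α (k + 1 + i) * ‖Cinv (k + 1 + i) (k + 1)‖)
    (hC : ∀ k, (∑' i, α (k + 1 + i) * ‖Cinv (k + 1 + i) (k + 1)‖) ≤ K₂)
    (hcontr : ε * (K₁ + K₂) < α 0 * lam) :
    (1 - α 0 * lam + ε * (K₁ + K₂) < 1) ∧
    ∀ x y : ℕ → EuclideanSpace ℝ (Fin s) × EuclideanSpace ℝ (Fin u),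
      (∀ n, ‖x n‖ ≤ δ) → (∀ n, ‖y n‖ ≤ δ) →
      Tendsto x atTop (nhds 0) → Tendsto y atTop (nhds 0) →
      ∀ C' : ℝ, 0 ≤ C' → (∀ n, ‖x n - y n‖ ≤ C') → ∀ k,
      ‖((B k 0 ((x 0).1) + ∑ i ∈ Finset.range (k + 1), B k (i + 1) ((η i (x i)).1),
          -∑' i, Cinv (k + 1 + i) (k + 1) ((η (k + 1 + i) (x (k + 1 + i))).2)) :
          EuclideanSpace ℝ (Fin s) × EuclideanSpace ℝ (Fin u))
        - (B k 0 ((y 0).1) + ∑ i ∈ Finset.range (k + 1), B k (i + 1) ((η i (y i)).1),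
          -∑' i, Cinv (k + 1 + i) (k + 1) ((η (k + 1 + i) (y (k + 1 + i))).2))‖
        ≤ (1 - α 0 * lam + ε * (K₁ + K₂)) * C' :=
  stmt14_general δ ε lam K₁ K₂ α B Cinv η hδ hε hα hη0 hη hB0 hB hCsummable hC hcontr
end

section
/- Let H be real diagonal with a negative eigenvalue, α_k > 0 with α_k ≥ 1/(k+1) and α_k → 0, and η(k,·) satisfying ‖η(k,x)‖ ≤ α_k ε ‖x‖ on a neighborhood U of 0 (for small ε). If the iterates x_{k+1} = (I - α_k H)x_k + η(k,x_k) remain in U for all k and the unstable component x_k⁻ is bounded away from 0 along a subsequence, then (x_k) cannot remain bounded in U; hence any trajectory staying in U forever must have x_k⁻ → 0. -/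
open Matrix Filter

theorem stmt15 {d : ℕ} (lam : Fin d → ℝ) (α : ℕ → ℝ) (ε δ c : ℝ)
    (η : ℕ → (Fin d → ℝ) → (Fin d → ℝ)) (x : ℕ → Fin d → ℝ) (i₀ : Fin d)
    (hneg : lam i₀ < 0) (hδ : 0 < δ) (hε : 0 < ε) (hc : 0 < c)
    (hα : ∀ k, 0 < α k) (hαge : ∀ k : ℕ, 1 / ((k : ℝ) + 1) ≤ α k)
    (hα0 : Tendsto α atTop (nhds 0))
    (hη : ∀ k y, ‖y‖ ≤ δ → ‖η k y‖ ≤ α k * ε * ‖y‖)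
    (hiter : ∀ k, x (k + 1) =
      ((1 : Matrix (Fin d) (Fin d) ℝ) - α k • Matrix.diagonal lam) *ᵥ x k + η k (x k))
    (hsmall : ε * δ < c * (-lam i₀))
    (hsub : ∀ N : ℕ, ∃ k, N ≤ k ∧ c ≤ |x k i₀|) :
    ¬ (∀ k, ‖x k‖ ≤ δ) := by
  intro hbd
  obtain ⟨k₀, -, hk₀⟩ := hsub 0
  set μ : ℝ := -lam i₀ with hμ
  have hμpos : 0 < μ := by simp only [hμ]; linarith
  set r : ℝ := c * μ - ε * δ with hr
  have hrpos : 0 < r := by simp only [hr]; linarith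
  have key : ∀ n, c + r * ∑ j ∈ Finset.range n, α (k₀ + j) ≤ |x (k₀ + n) i₀| := by
    intro n
    induction n with
    | zero => simpa using hk₀
    | succ n ih =>
      have hsumnn : 0 ≤ ∑ j ∈ Finset.range n, α (k₀ + j) :=
        Finset.sum_nonneg fun j _ => (hα _).le
      have hc' : c ≤ |x (k₀ + n) i₀| := by nlinarith
      set k := k₀ + n with hk
      have hcomp : x (k + 1) i₀ = (1 - α k * lam i₀) * x k i₀ + η k (x k) i₀ := by
        rw [hiter k]
        simp [Matrix.sub_mulVec, Matrix.one_mulVec, Matrix.smul_mulVec,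
          Matrix.mulVec_diagonal]
        ring
      have hηb : |η k (x k) i₀| ≤ α k * ε * δ := by
        calc |η k (x k) i₀| = ‖η k (x k) i₀‖ := (Real.norm_eq_abs _).symm
          _ ≤ ‖η k (x k)‖ := norm_le_pi_norm _ i₀
          _ ≤ α k * ε * ‖x k‖ := hη k (x k) (hbd k)
          _ ≤ α k * ε * δ :=
              mul_le_mul_of_nonneg_left (hbd k) (mul_nonneg (hα k).le hε.le)
      have habs : |(1 - α k * lam i₀) * x k i₀| = (1 + α k * μ) * |x k i₀| := by
        rw [abs_mul, abs_of_pos (by nlinarith [hα k] : (0:ℝ) < 1 - α k * lam i₀)]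
        simp only [hμ]; ring
      have htri : |(1 - α k * lam i₀) * x k i₀| - |η k (x k) i₀| ≤ |x (k + 1) i₀| := by
        have := abs_sub_abs_le_abs_sub ((1 - α k * lam i₀) * x k i₀) (-(η k (x k) i₀))
        rw [abs_neg, sub_neg_eq_add, ← hcomp] at this
        exact this
      have hstep : |x k i₀| + α k * r ≤ |x (k + 1) i₀| := by
        rw [habs] at htri
        have hexp : 0 ≤ α k * μ * (|x k i₀| - c) :=
          mul_nonneg (mul_nonneg (hα k).le hμpos.le) (sub_nonneg.mpr hc')
        rw [hr]
        nlinarith [hηb, hexp, htri]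
      rw [Finset.sum_range_succ]
      have : c + r * ∑ j ∈ Finset.range n, α (k₀ + j) + α k * r ≤ |x (k + 1) i₀| := by
        linarith
      calc c + r * (∑ j ∈ Finset.range n, α (k₀ + j) + α (k₀ + n))
          = c + r * ∑ j ∈ Finset.range n, α (k₀ + j) + α k * r := by rw [hk]; ring
        _ ≤ |x (k + 1) i₀| := this
        _ = |x (k₀ + (n + 1)) i₀| := by rw [show k₀ + (n + 1) = k + 1 from by omega]
  -- the partial sums diverge
  have hdiv : Tendsto (fun n => ∑ j ∈ Finset.range n, α (k₀ + j)) atTop atTop := by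
    have h1 : Tendsto (fun n => (∑ i ∈ Finset.range n, (1 / ((i : ℝ) + 1)))
        - ∑ i ∈ Finset.range k₀, (1 / ((i : ℝ) + 1))) atTop atTop :=
      tendsto_atTop_add_const_right _ _ Real.tendsto_sum_range_one_div_nat_succ_atTop
    apply tendsto_atTop_mono _ h1
    intro n
    have hmono : (∑ i ∈ Finset.range n, (1 / ((i : ℝ) + 1)))
        ≤ ∑ i ∈ Finset.range (k₀ + n), (1 / ((i : ℝ) + 1)) := by
      apply Finset.sum_le_sum_of_subset_of_nonneg
      · exact Finset.range_subset_range.mpr (Nat.le_add_left n k₀)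
      · intro i _ _; positivity
    have hsplit : (∑ i ∈ Finset.range (k₀ + n), (1 / ((i : ℝ) + 1)))
        = (∑ i ∈ Finset.range k₀, (1 / ((i : ℝ) + 1)))
          + ∑ j ∈ Finset.range n, (1 / (((k₀ + j : ℕ) : ℝ) + 1)) := by
      rw [Finset.sum_range_add]
    have hle : ∑ j ∈ Finset.range n, (1 / (((k₀ + j : ℕ) : ℝ) + 1))
        ≤ ∑ j ∈ Finset.range n, α (k₀ + j) :=
      Finset.sum_le_sum fun j _ => hαge (k₀ + j)
    have := hsplit ▸ hmono
    linarith
  have hdiv2 : Tendsto (fun n => c + r * ∑ j ∈ Finset.range n, α (k₀ + j)) atTop atTop :=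
    tendsto_atTop_add_const_left _ _ (hdiv.const_mul_atTop hrpos)
  obtain ⟨n, hn⟩ := (hdiv2.eventually_gt_atTop δ).exists
  have h1 : |x (k₀ + n) i₀| ≤ δ :=
    le_trans (norm_le_pi_norm (x (k₀ + n)) i₀) (hbd _)
  linarith [key n]
end
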